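/- arXiv:2007.14311 — 4 statements merged into one kernel-verified Lean document; each statement's English description precedes it below -/
import Mathlib

section
/- Every polynomial f of degree n on ℝ^{p+1} can be written as f = Σ_{m=0}^{⌊n/2⌋} r^{2m} h_m, where each h_m is a harmonic polynomial (of degree at most n - 2m) and r² = Σ_j (x^j)². -/
/-!
For the Fischer inner product `⟨f, g⟩ = ∑ₛ s! fₛ gₛ` (where `s! = ∏ᵢ (sᵢ)!`), multiplication by
`xᵢ` is adjoint to `∂ᵢ`, so multiplication by `r²` is adjoint to the Laplacian `Δ`. Hence
`⟨r² g, r² g⟩ = ⟨g, Δ (r² g)⟩`, and `g ↦ Δ (r² g)` is injective. It preserves the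
finite-dimensional space of polynomials of degree `≤ d`, so it is onto that space. Given `f` of
degree `≤ n + 2`, choose `g` of degree `≤ n` with `Δ (r² g) = Δ f`: then `f = r² g + h₀` with
`h₀` harmonic, and induction on `n` decomposes `g`.
-/

open MvPolynomial

/-- The Laplacian on polynomials in `p+1` variables, as a linear map. -/
noncomputable def polyLaplacian (p : ℕ) :
    MvPolynomial (Fin (p + 1)) ℝ →ₗ[ℝ] MvPolynomial (Fin (p + 1)) ℝ :=
  ∑ j : Fin (p + 1),
    ((pderiv j).toLinearMap ∘ₗ (pderiv j).toLinearMap)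

/-- The polynomial `r² = ∑ⱼ (xʲ)²`. -/
noncomputable def rSq (p : ℕ) : MvPolynomial (Fin (p + 1)) ℝ :=
  ∑ j : Fin (p + 1), (X j) ^ 2

open scoped Nat

namespace Finsupp

lemma prod_factorial_add_single {σ : Type*} (s : σ →₀ ℕ) (i : σ) :
    ((s + single i 1).prod fun _ k => k !) = (s i + 1) * s.prod fun _ k => k ! := by
  classical
  rw [← mul_prod_erase' _ i _ fun _ => Nat.factorial_zero,
    ← mul_prod_erase' s i _ fun _ => Nat.factorial_zero]
  simp [erase_add, Nat.factorial_succ, mul_assoc]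

end Finsupp

namespace MvPolynomial

variable {σ R : Type*}

section Fischer

variable [CommSemiring R]

noncomputable def fischer (f g : MvPolynomial σ R) : R :=
  ∑ s ∈ f.support, ((s.prod fun _ k => k ! : ℕ) : R) * f.coeff s * g.coeff s

lemma fischer_eq_sum_of_support_subset {f g : MvPolynomial σ R} {t : Finset (σ →₀ ℕ)}
    (ht : f.support ⊆ t) :
    fischer f g = ∑ s ∈ t, ((s.prod fun _ k => k ! : ℕ) : R) * f.coeff s * g.coeff s :=
  Finset.sum_subset ht fun s _ hs => by simp [notMem_support_iff.1 hs]

lemma fischer_add_left (f₁ f₂ g : MvPolynomial σ R) :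
    fischer (f₁ + f₂) g = fischer f₁ g + fischer f₂ g := by
  classical
  rw [fischer_eq_sum_of_support_subset support_add,
    fischer_eq_sum_of_support_subset Finset.subset_union_left,
    fischer_eq_sum_of_support_subset Finset.subset_union_right, ← Finset.sum_add_distrib]
  simp only [coeff_add, add_mul, mul_add]

lemma fischer_sum_left {ι : Type*} (t : Finset ι) (f : ι → MvPolynomial σ R)
    (g : MvPolynomial σ R) : fischer (∑ j ∈ t, f j) g = ∑ j ∈ t, fischer (f j) g :=
  map_sum (⟨⟨(fischer · g), Finset.sum_empty⟩, (fischer_add_left · · g)⟩ :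
    MvPolynomial σ R →+ R) f t

lemma fischer_sum_right {ι : Type*} (t : Finset ι) (f : MvPolynomial σ R)
    (g : ι → MvPolynomial σ R) : fischer f (∑ j ∈ t, g j) = ∑ j ∈ t, fischer f (g j) := by
  simp only [fischer, coeff_sum, Finset.mul_sum]
  exact Finset.sum_comm

lemma fischer_X_mul (i : σ) (f g : MvPolynomial σ R) :
    fischer (X i * f) g = fischer f (pderiv i g) := by
  rw [fischer, fischer, support_X_mul, Finset.sum_map]
  refine Finset.sum_congr rfl fun s _ => ?_
  rw [addLeftEmbedding_apply, coeff_X_mul, coeff_pderiv, add_comm,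
    Finsupp.prod_factorial_add_single]
  push_cast
  ring

end Fischer

lemma eq_zero_of_fischer_self_eq_zero [CommRing R] [LinearOrder R] [IsStrictOrderedRing R]
    {f : MvPolynomial σ R} (h : fischer f f = 0) : f = 0 := by
  have hweight (s : σ →₀ ℕ) : (0 : R) < (s.prod fun _ k => k ! : ℕ) :=
    Nat.cast_pos.2 (Finset.prod_pos fun _ _ => Nat.factorial_pos _)
  have hterm (s : σ →₀ ℕ) :
      ((s.prod fun _ k => k ! : ℕ) : R) * f.coeff s * f.coeff s =
        (s.prod fun _ k => k ! : ℕ) * (f.coeff s * f.coeff s) :=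
    mul_assoc _ _ _
  have hterms_zero := (Finset.sum_eq_zero_iff_of_nonneg fun s _ =>
    hterm s ▸ mul_nonneg (hweight s).le (mul_self_nonneg (f.coeff s))).1 h
  ext s
  by_contra hs
  have := hterm s ▸ hterms_zero s (mem_support_iff.2 hs)
  exact hs (mul_self_eq_zero.1 ((mul_eq_zero.1 this).resolve_left (hweight s).ne'))

lemma totalDegree_pderiv_le [CommSemiring R] (i : σ) (f : MvPolynomial σ R) :
    (pderiv i f).totalDegree ≤ f.totalDegree - 1 := by
  refine Finset.sup_le fun s hs => ?_
  have hmem : s + Finsupp.single i 1 ∈ f.support := by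
    rw [mem_support_iff, coeff_pderiv] at hs
    exact mem_support_iff.2 (left_ne_zero_of_mul hs)
  have := le_totalDegree hmem
  rw [Finsupp.sum_add_index' (fun _ => rfl) (fun _ _ _ => rfl),
    Finsupp.sum_single_index rfl] at this
  omega

end MvPolynomial

section Laplacian

variable {p : ℕ}

lemma polyLaplacian_apply (f : MvPolynomial (Fin (p + 1)) ℝ) :
    polyLaplacian p f = ∑ j, pderiv j (pderiv j f) := by
  simp [polyLaplacian]

lemma rSq_ne_zero : rSq p ≠ 0 := by
  intro h
  have := congrArg (eval fun _ => (1 : ℝ)) h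
  simp only [rSq, map_sum, map_pow, eval_X, one_pow, Finset.sum_const, Finset.card_univ,
    Fintype.card_fin, nsmul_eq_mul, mul_one, map_zero] at this
  exact Nat.cast_ne_zero.2 p.succ_ne_zero this

lemma totalDegree_rSq_le : (rSq p).totalDegree ≤ 2 :=
  (totalDegree_finsetSum _ _).trans (Finset.sup_le fun j _ => (totalDegree_X_pow j 2).le)

lemma totalDegree_rSq_mul_le (g : MvPolynomial (Fin (p + 1)) ℝ) :
    (rSq p * g).totalDegree ≤ g.totalDegree + 2 :=
  (totalDegree_mul _ _).trans (by have := totalDegree_rSq_le (p := p); omega)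

lemma totalDegree_polyLaplacian_le (f : MvPolynomial (Fin (p + 1)) ℝ) :
    (polyLaplacian p f).totalDegree ≤ f.totalDegree - 2 := by
  rw [polyLaplacian_apply]
  refine (totalDegree_finsetSum _ _).trans (Finset.sup_le fun j _ => ?_)
  have h₁ := totalDegree_pderiv_le j (pderiv j f)
  have h₂ := totalDegree_pderiv_le j f
  omega

lemma polyLaplacian_eq_zero_of_totalDegree_le_one {f : MvPolynomial (Fin (p + 1)) ℝ}
    (hf : f.totalDegree ≤ 1) : polyLaplacian p f = 0 := by
  rw [polyLaplacian_apply]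
  refine Finset.sum_eq_zero fun j _ => ?_
  have : (pderiv j f).totalDegree = 0 := by
    have := totalDegree_pderiv_le j f
    omega
  rw [totalDegree_eq_zero_iff_eq_C.1 this, pderiv_C]

lemma fischer_rSq_mul (f g : MvPolynomial (Fin (p + 1)) ℝ) :
    fischer (rSq p * f) g = fischer f (polyLaplacian p g) := by
  have : rSq p * f = ∑ j, X j * (X j * f) := by
    simp only [rSq, Finset.sum_mul, sq, mul_assoc]
  rw [this, fischer_sum_left, polyLaplacian_apply, fischer_sum_right]
  simp only [fischer_X_mul]

lemma polyLaplacian_comp_mulLeft_rSq_injective :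
    Function.Injective (polyLaplacian p ∘ₗ LinearMap.mulLeft ℝ (rSq p)) := by
  refine (injective_iff_map_eq_zero _).2 fun g hg => ?_
  have hΔ : polyLaplacian p (rSq p * g) = 0 := hg
  have : fischer (rSq p * g) (rSq p * g) = 0 := by
    rw [fischer_rSq_mul, hΔ]
    simp [fischer]
  simpa [rSq_ne_zero] using eq_zero_of_fischer_self_eq_zero this

lemma exists_polyLaplacian_rSq_mul_eq {d : ℕ} {F : MvPolynomial (Fin (p + 1)) ℝ}
    (hF : F.totalDegree ≤ d) :
    ∃ g : MvPolynomial (Fin (p + 1)) ℝ, g.totalDegree ≤ d ∧ polyLaplacian p (rSq p * g) = F := by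
  have hmaps : ∀ g ∈ restrictTotalDegree (Fin (p + 1)) ℝ d,
      (polyLaplacian p ∘ₗ LinearMap.mulLeft ℝ (rSq p)) g ∈ restrictTotalDegree _ ℝ d := by
    simp only [mem_restrictTotalDegree, LinearMap.comp_apply, LinearMap.mulLeft_apply]
    intro g hg
    have h₁ := totalDegree_polyLaplacian_le (rSq p * g)
    have h₂ := totalDegree_rSq_mul_le g
    omega
  obtain ⟨g, hg, hgF⟩ := (LinearMap.injOn_iff_surjOn hmaps).1
    polyLaplacian_comp_mulLeft_rSq_injective.injOn ((mem_restrictTotalDegree _ _ _).2 hF)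
  exact ⟨g, (mem_restrictTotalDegree _ _ _).1 hg, hgF⟩

lemma exists_polyLaplacian_sub_rSq_mul_eq_zero {d : ℕ} {f : MvPolynomial (Fin (p + 1)) ℝ}
    (hf : f.totalDegree ≤ d + 2) :
    ∃ g : MvPolynomial (Fin (p + 1)) ℝ, g.totalDegree ≤ d ∧
      polyLaplacian p (f - rSq p * g) = 0 := by
  obtain ⟨g, hg, hgf⟩ := exists_polyLaplacian_rSq_mul_eq
    ((totalDegree_polyLaplacian_le f).trans (Nat.sub_le_of_le_add hf))
  exact ⟨g, hg, by rw [map_sub, hgf, sub_self]⟩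

end Laplacian

section Decomposition

def HasHarmonicDecomposition (p n : ℕ) (f : MvPolynomial (Fin (p + 1)) ℝ) : Prop :=
  ∃ h : ℕ → MvPolynomial (Fin (p + 1)) ℝ,
    (∀ m, polyLaplacian p (h m) = 0) ∧
    (∀ m, (h m).totalDegree ≤ n - 2 * m) ∧
    f = ∑ m ∈ Finset.range (n / 2 + 1), (rSq p) ^ m * h m

variable {p n : ℕ}

lemma HasHarmonicDecomposition.of_polyLaplacian_eq_zero {f : MvPolynomial (Fin (p + 1)) ℝ}
    (hΔ : polyLaplacian p f = 0) (hf : f.totalDegree ≤ n) : HasHarmonicDecomposition p n f := by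
  refine ⟨Pi.single 0 f, fun m => ?_, fun m => ?_, ?_⟩
  · rcases eq_or_ne m 0 with rfl | hm <;> simp [*]
  · rcases eq_or_ne m 0 with rfl | hm <;> simp [*]
  · rw [Finset.sum_eq_single_of_mem 0 (by simp) fun m _ hm => by simp [hm]]
    simp

lemma HasHarmonicDecomposition.rSq_mul_add {g h₀ : MvPolynomial (Fin (p + 1)) ℝ}
    (hg : HasHarmonicDecomposition p n g) (hΔ : polyLaplacian p h₀ = 0)
    (hh₀ : h₀.totalDegree ≤ n + 2) : HasHarmonicDecomposition p (n + 2) (rSq p * g + h₀) := by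
  obtain ⟨k, hkΔ, hkdeg, rfl⟩ := hg
  refine ⟨fun m => if m = 0 then h₀ else k (m - 1), fun m => ?_, fun m => ?_, ?_⟩
  · dsimp only
    split_ifs <;> simp [*]
  · dsimp only
    split_ifs
    · simp [*]
    · have := hkdeg (m - 1)
      omega
  · rw [show (n + 2) / 2 + 1 = n / 2 + 1 + 1 by omega, Finset.sum_range_succ' _ (n / 2 + 1),
      Finset.mul_sum]
    simp only [Nat.add_one_ne_zero, if_false, Nat.add_sub_cancel, if_true, pow_zero, one_mul,
      pow_succ', mul_assoc]

lemma hasHarmonicDecomposition_of_totalDegree_le {f : MvPolynomial (Fin (p + 1)) ℝ}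
    (hf : f.totalDegree ≤ n) : HasHarmonicDecomposition p n f := by
  induction n using Nat.twoStepInduction generalizing f with
  | zero =>
    exact .of_polyLaplacian_eq_zero (polyLaplacian_eq_zero_of_totalDegree_le_one (by omega)) hf
  | one => exact .of_polyLaplacian_eq_zero (polyLaplacian_eq_zero_of_totalDegree_le_one hf) hf
  | more n ih _ =>
    obtain ⟨g, hg, hΔ⟩ := exists_polyLaplacian_sub_rSq_mul_eq_zero hf
    have hdeg : (f - rSq p * g).totalDegree ≤ n + 2 :=
      (totalDegree_sub _ _).trans (max_le hf ((totalDegree_rSq_mul_le g).trans (by omega)))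
    simpa only [add_sub_cancel] using (ih hg).rSq_mul_add hΔ hdeg

end Decomposition

/-- Every polynomial `f` of degree `n` on `ℝ^{p+1}` can be written as
`f = ∑_{m=0}^{⌊n/2⌋} r^{2m} h_m` with each `h_m` harmonic of degree at most `n - 2m`. -/
theorem harmonic_decomposition (p n : ℕ) (f : MvPolynomial (Fin (p + 1)) ℝ)
    (hf : f.totalDegree = n) :
    ∃ h : ℕ → MvPolynomial (Fin (p + 1)) ℝ,
      (∀ m, polyLaplacian p (h m) = 0) ∧
      (∀ m, (h m).totalDegree ≤ n - 2 * m) ∧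
      f = ∑ m ∈ Finset.range (n / 2 + 1), (rSq p) ^ m * h m :=
  hasHarmonicDecomposition_of_totalDegree_le hf.le
end

section
/- Let m > 0, a > 0, ξ ∈ ℝ with m² + ξR > 0 where R = 6/a², let c = m²a² + 6ξ - 1 and l_n = sqrt((n+1)² + c), and let Y₁, Y₂ ∈ ℝ. There exists a sequence (a_n)_{n≥0} of nonnegative reals with m² Σ_n a_n = Y₁ and Σ_n a_n l_n²/a² = Y₂ if and only if (Y₁ = Y₂ = 0) or (m² Y₂ ≥ (m² + ξR) Y₁ > 0). -/
/-!
Dividing by `m²`, this is a two-moment problem on `ℕ`: which pairs (mass `A`, `w`-moment `B`)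
can a nonnegative sequence have, for the weights `w n = l_n² / a²`? These weights attain their
minimum `m² + ξR` at `n = 0` and are unbounded. Termwise comparison gives `B ≥ (m² + ξR) A`,
and `A = 0` forces the sequence, hence `B`, to vanish; conversely any `B ≥ (m² + ξR) A` with
`A > 0` is reached by splitting `A` between mode `0` and a mode `n` with `w n ≥ B / A`.
-/

open Set

section TwoMomentProblem

variable {ι : Type*} {w a : ι → ℝ} {A B : ℝ}

theorem mul_le_of_hasSum_of_forall_le {i₀ : ι} (hw : ∀ i, w i₀ ≤ w i) (ha : ∀ i, 0 ≤ a i)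
    (hA : HasSum a A) (hB : HasSum (fun i => a i * w i) B) : w i₀ * A ≤ B :=
  hasSum_le (fun i => by rw [mul_comm]; exact mul_le_mul_of_nonneg_left (hw i) (ha i))
    (hA.mul_left (w i₀)) hB

theorem eq_zero_of_hasSum_of_hasSum_zero (ha : ∀ i, 0 ≤ a i) (hA : HasSum a 0)
    (hB : HasSum (fun i => a i * w i) B) : B = 0 := by
  have ha0 : a = 0 := (hasSum_zero_iff_of_nonneg ha).mp hA
  subst ha0
  have hB0 : HasSum (fun _ : ι => (0 : ℝ)) B := by simpa using hB
  exact hB0.unique hasSum_zero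

theorem exists_nonneg_hasSum_of_mul_le_of_le_mul [DecidableEq ι] {i₀ i₁ : ι}
    (hw : w i₀ < w i₁) (hlo : w i₀ * A ≤ B) (hhi : B ≤ w i₁ * A) :
    ∃ a : ι → ℝ, (∀ i, 0 ≤ a i) ∧ HasSum a A ∧ HasSum (fun i => a i * w i) B := by
  set t := (B - w i₀ * A) / (w i₁ - w i₀)
  have hgap : 0 < w i₁ - w i₀ := sub_pos.mpr hw
  have ht : 0 ≤ t := div_nonneg (by linarith) hgap.le
  have htA : t ≤ A := (div_le_iff₀ hgap).mpr (by linarith)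
  have hnn : (0 : ι → ℝ) ≤ Pi.single i₀ (A - t) + Pi.single i₁ t :=
    add_nonneg (Pi.single_nonneg.2 (sub_nonneg.2 htA)) (Pi.single_nonneg.2 ht)
  refine ⟨Pi.single i₀ (A - t) + Pi.single i₁ t, hnn, ?_, ?_⟩
  · have hsum := (hasSum_pi_single i₀ (A - t)).add (hasSum_pi_single i₁ t)
    rwa [sub_add_cancel] at hsum
  · have hsum := (hasSum_pi_single i₀ ((A - t) * w i₀)).add (hasSum_pi_single i₁ (t * w i₁))
    simp only [Pi.single_mul_left_apply] at hsum
    convert hsum using 1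
    · ext i; simp [add_mul]
    · have hsplit : t * (w i₁ - w i₀) = B - w i₀ * A := div_mul_cancel₀ _ hgap.ne'
      linear_combination -hsplit

theorem exists_nonneg_hasSum_and_hasSum_mul_iff [DecidableEq ι] {i₀ : ι}
    (hw : ∀ i, w i₀ ≤ w i) (hunb : ¬BddAbove (range w)) :
    (∃ a : ι → ℝ, (∀ i, 0 ≤ a i) ∧ HasSum a A ∧ HasSum (fun i => a i * w i) B) ↔
      (A = 0 ∧ B = 0) ∨ (w i₀ * A ≤ B ∧ 0 < A) := by
  constructor
  · rintro ⟨a, ha, hA, hB⟩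
    rcases (hA.nonneg ha).eq_or_lt with rfl | hApos
    · exact Or.inl ⟨rfl, eq_zero_of_hasSum_of_hasSum_zero ha hA hB⟩
    · exact Or.inr ⟨mul_le_of_hasSum_of_forall_le hw ha hA hB, hApos⟩
  · rintro (⟨rfl, rfl⟩ | ⟨hlo, hApos⟩)
    · exact ⟨0, fun _ => le_rfl, hasSum_zero, by simp⟩
    · obtain ⟨_, ⟨i₁, rfl⟩, hi₁⟩ := not_bddAbove_iff.mp hunb (max (w i₀) (B / A))
      rw [max_lt_iff, div_lt_iff₀ hApos] at hi₁
      exact exists_nonneg_hasSum_of_mul_le_of_le_mul hi₁.1 hlo hi₁.2.le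

end TwoMomentProblem

/-- `l_n² / r²`, where `r` is the radius called `a` in the paper. -/
noncomputable def modeWeight (m r ξ : ℝ) (n : ℕ) : ℝ :=
  √(((n : ℝ) + 1) ^ 2 + (m ^ 2 * r ^ 2 + 6 * ξ - 1)) ^ 2 / r ^ 2

section ModeWeight
variable {m r ξ : ℝ}

theorem modeWeight_eq (hr : r ≠ 0) (hpos : 0 ≤ m ^ 2 + ξ * (6 / r ^ 2)) (n : ℕ) :
    modeWeight m r ξ n = m ^ 2 + ξ * (6 / r ^ 2) + (((n : ℝ) + 1) ^ 2 - 1) / r ^ 2 := by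
  have hsplit : ((n : ℝ) + 1) ^ 2 + (m ^ 2 * r ^ 2 + 6 * ξ - 1)
      = (m ^ 2 + ξ * (6 / r ^ 2)) * r ^ 2 + (((n : ℝ) + 1) ^ 2 - 1) := by
    field_simp; ring
  have hn : 0 ≤ ((n : ℝ) + 1) ^ 2 - 1 := by nlinarith [n.cast_nonneg (α := ℝ)]
  rw [modeWeight, Real.sq_sqrt (by rw [hsplit]; exact add_nonneg (by positivity) hn), hsplit]
  field_simp

theorem modeWeight_zero_le (hr : r ≠ 0) (hpos : 0 ≤ m ^ 2 + ξ * (6 / r ^ 2)) (n : ℕ) :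
    modeWeight m r ξ 0 ≤ modeWeight m r ξ n := by
  rw [modeWeight_eq hr hpos, modeWeight_eq hr hpos]
  gcongr
  simp

theorem not_bddAbove_range_modeWeight (hr : r ≠ 0) (hpos : 0 ≤ m ^ 2 + ξ * (6 / r ^ 2)) :
    ¬BddAbove (range (modeWeight m r ξ)) := by
  refine not_bddAbove_iff.2 fun x => ?_
  obtain ⟨n, hn⟩ := exists_nat_gt ((x - (m ^ 2 + ξ * (6 / r ^ 2))) * r ^ 2)
  refine ⟨_, mem_range_self n, ?_⟩
  have hr2 : 0 < r ^ 2 := by positivity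
  have hlt : x - (m ^ 2 + ξ * (6 / r ^ 2)) < (((n : ℝ) + 1) ^ 2 - 1) / r ^ 2 := by
    rw [lt_div_iff₀ hr2]
    nlinarith [n.cast_nonneg (α := ℝ)]
  rw [modeWeight_eq hr hpos]
  linarith

end ModeWeight

/-- Massive solvability criterion for the semi-classical Einstein equation on the Einstein
static universe of radius `r`: with `R = 6/r²`, `c = m²r² + 6ξ - 1` and
`lₙ = √((n+1)² + c)`, there exists a sequence of nonnegative mode coefficients `aₙ` with
`m² ∑ aₙ = Y₁` and `∑ aₙ lₙ²/r² = Y₂` (both series converging) if and only if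
`Y₁ = Y₂ = 0` or `m² Y₂ ≥ (m² + ξR) Y₁ > 0`. -/
theorem massive_solvability (m r ξ Y₁ Y₂ : ℝ) (hm : 0 < m) (hr : 0 < r)
    (hpos : 0 < m ^ 2 + ξ * (6 / r ^ 2)) :
    (∃ a : ℕ → ℝ, (∀ n, 0 ≤ a n) ∧
        HasSum (fun n => m ^ 2 * a n) Y₁ ∧
        HasSum (fun n : ℕ =>
          a n * (Real.sqrt (((n : ℝ) + 1) ^ 2 + (m ^ 2 * r ^ 2 + 6 * ξ - 1))) ^ 2 / r ^ 2) Y₂)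
      ↔ (Y₁ = 0 ∧ Y₂ = 0) ∨
        (m ^ 2 * Y₂ ≥ (m ^ 2 + ξ * (6 / r ^ 2)) * Y₁ ∧
          0 < (m ^ 2 + ξ * (6 / r ^ 2)) * Y₁) := by
  have hm2 : 0 < m ^ 2 := by positivity
  obtain ⟨A, rfl⟩ : ∃ A, Y₁ = m ^ 2 * A := ⟨Y₁ / m ^ 2, (mul_div_cancel₀ _ hm2.ne').symm⟩
  have hw0 : modeWeight m r ξ 0 = m ^ 2 + ξ * (6 / r ^ 2) := by
    simpa using modeWeight_eq hr.ne' hpos.le 0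
  have hmoment := exists_nonneg_hasSum_and_hasSum_mul_iff (A := A) (B := Y₂)
    (modeWeight_zero_le hr.ne' hpos.le) (not_bddAbove_range_modeWeight hr.ne' hpos.le)
  rw [hw0] at hmoment
  simp_rw [hasSum_mul_left_iff hm2.ne', mul_div_assoc]
  refine hmoment.trans ?_
  rw [mul_eq_zero, mul_pos_iff_of_pos_left hpos, mul_pos_iff_of_pos_left hm2,
    mul_left_comm, ge_iff_le, mul_le_mul_iff_right₀ hm2]
  simp only [hm2.ne', false_or]
end

section
/- Let m > 0, c > -1, l_n = sqrt((n+1)²+c), and suppose m² Y₂ ≥ (c+1) Y₁ / a² > 0 (with a > 0). Then for any N ∈ ℕ large enough that l_N² Y₁/(a² m²) ≥ Y₂, setting a_0 = (a²/(l_N² - l_0²))·(l_N² Y₁/(a²m²) - Y₂), a_N = (a²/(l_N² - l_0²))·(Y₂ - l_0² Y₁/(a²m²)), and a_n = 0 otherwise, yields a_0 ≥ 0, a_N ≥ 0, m²(a_0 + a_N) = Y₁ and (a_0 l_0² + a_N l_N²)/a² = Y₂. Moreover, if m²Y₂ > (c+1)Y₁/a², distinct values of N give distinct solutions, so there are infinitely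 many such nonnegative solutions. -/
/-- `lₙ = √((n+1)² + c)`. -/
noncomputable def lfun (c : ℝ) (n : ℕ) : ℝ := Real.sqrt (((n : ℝ) + 1) ^ 2 + c)

/-- The coefficient `a₀` of the explicit two-mode solution. -/
noncomputable def a0val (c r m Y₁ Y₂ : ℝ) (N : ℕ) : ℝ :=
  r ^ 2 / ((lfun c N) ^ 2 - (lfun c 0) ^ 2) * ((lfun c N) ^ 2 * Y₁ / (r ^ 2 * m ^ 2) - Y₂)

/-- The coefficient `a_N` of the explicit two-mode solution. -/
noncomputable def aNval (c r m Y₁ Y₂ : ℝ) (N : ℕ) : ℝ :=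
  r ^ 2 / ((lfun c N) ^ 2 - (lfun c 0) ^ 2) * (Y₂ - (lfun c 0) ^ 2 * Y₁ / (r ^ 2 * m ^ 2))

/-- The full two-mode sequence: `a₀` at `0`, `a_N` at `N`, and `0` elsewhere. -/
noncomputable def twoModeSeq (c r m Y₁ Y₂ : ℝ) (N : ℕ) : ℕ → ℝ := fun k =>
  if k = 0 then a0val c r m Y₁ Y₂ N else if k = N then aNval c r m Y₁ Y₂ N else 0

/-- The explicit two-mode construction of solutions of the semi-classical Einstein equation:
if `m² Y₂ ≥ (c+1) Y₁ / r² > 0` then for every `N ≥ 1` with `l_N² Y₁/(r²m²) ≥ Y₂` the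
coefficients `a₀, a_N` above are nonnegative and satisfy `m²(a₀ + a_N) = Y₁` and
`(a₀ l₀² + a_N l_N²)/r² = Y₂`; moreover, if the first inequality is strict then distinct
admissible values of `N` give distinct solutions (so there are infinitely many). -/
theorem two_mode_construction (m c r Y₁ Y₂ : ℝ) (hm : 0 < m) (hc : -1 < c) (hr : 0 < r)
    (h₁ : m ^ 2 * Y₂ ≥ (c + 1) * Y₁ / r ^ 2) (h₂ : 0 < (c + 1) * Y₁ / r ^ 2) :
    (∀ N : ℕ, 1 ≤ N → (lfun c N) ^ 2 * Y₁ / (r ^ 2 * m ^ 2) ≥ Y₂ →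
      0 ≤ a0val c r m Y₁ Y₂ N ∧ 0 ≤ aNval c r m Y₁ Y₂ N ∧
      m ^ 2 * (a0val c r m Y₁ Y₂ N + aNval c r m Y₁ Y₂ N) = Y₁ ∧
      (a0val c r m Y₁ Y₂ N * (lfun c 0) ^ 2 + aNval c r m Y₁ Y₂ N * (lfun c N) ^ 2) / r ^ 2
        = Y₂) ∧
    (m ^ 2 * Y₂ > (c + 1) * Y₁ / r ^ 2 →
      ∀ N N' : ℕ, 1 ≤ N → 1 ≤ N' →
        (lfun c N) ^ 2 * Y₁ / (r ^ 2 * m ^ 2) ≥ Y₂ →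
        (lfun c N') ^ 2 * Y₁ / (r ^ 2 * m ^ 2) ≥ Y₂ →
        N ≠ N' → twoModeSeq c r m Y₁ Y₂ N ≠ twoModeSeq c r m Y₁ Y₂ N') := by
  have hm2 : (0:ℝ) < m ^ 2 := by positivity
  have hr2 : (0:ℝ) < r ^ 2 := by positivity
  have hc1 : (0:ℝ) < c + 1 := by linarith
  have hlsq : ∀ n : ℕ, (lfun c n) ^ 2 = ((n:ℝ) + 1) ^ 2 + c := by
    intro n
    have hn : (0:ℝ) ≤ (n:ℝ) := Nat.cast_nonneg n
    have : (0:ℝ) ≤ ((n:ℝ) + 1) ^ 2 + c := by nlinarith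
    simp [lfun, Real.sq_sqrt this]
  have hΔ : ∀ N : ℕ, 1 ≤ N → 0 < (lfun c N) ^ 2 - (lfun c 0) ^ 2 := by
    intro N hN
    rw [hlsq N, hlsq 0]
    have h1 : (1:ℝ) ≤ (N:ℝ) := by exact_mod_cast hN
    push_cast
    nlinarith
  constructor
  · intro N hN hge
    have hD := hΔ N hN
    have hDne : (lfun c N) ^ 2 - (lfun c 0) ^ 2 ≠ 0 := ne_of_gt hD
    refine ⟨?_, ?_, ?_, ?_⟩
    · apply mul_nonneg (le_of_lt (div_pos hr2 hD))
      linarith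
    · apply mul_nonneg (le_of_lt (div_pos hr2 hD))
      have hl0' : (lfun c 0) ^ 2 = c + 1 := by rw [hlsq 0]; push_cast; ring
      rw [hl0']
      have h₁' : (c + 1) * Y₁ ≤ m ^ 2 * Y₂ * r ^ 2 := by
        rw [ge_iff_le, div_le_iff₀ hr2] at h₁; linarith
      rw [sub_nonneg, div_le_iff₀ (by positivity)]
      nlinarith
    · unfold a0val aNval
      field_simp
      ring
    · unfold a0val aNval
      field_simp
      ring
  · intro hstrict N N' hN hN' hge hge' hne heq
    have hD := hΔ N hN
    have haN : 0 < aNval c r m Y₁ Y₂ N := by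
      apply mul_pos (div_pos hr2 hD)
      have hl0' : (lfun c 0) ^ 2 = c + 1 := by rw [hlsq 0]; push_cast; ring
      rw [hl0']
      have h₁' : (c + 1) * Y₁ < m ^ 2 * Y₂ * r ^ 2 := by
        rw [gt_iff_lt, div_lt_iff₀ hr2] at hstrict; linarith
      rw [sub_pos, div_lt_iff₀ (by positivity)]
      nlinarith
    have hN0 : N ≠ 0 := by omega
    have h := congrFun heq N
    simp [twoModeSeq, hN0, hne] at h
    exact absurd h (ne_of_gt haN)
end

section
/- Let a > 0, c > -1, l_n = sqrt((n+1)²+c), and β > 0. The function G(β) := Σ_{n=0}^∞ ((n+1)² l_n / (2π²a⁴)) · 1/(e^{β l_n/a} - 1) is well-defined (the series converges), continuous and strictly decreasing on (0,∞), tends to ∞ as β → 0⁺, and tends to 0 as β → ∞. Consequently, for each Y₂ > 0 there is a unique β > 0 with G(β) = Y₂. -/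
open Real Filter

/-- `G(β) = ∑ₙ ((n+1)² lₙ / (2π²r⁴)) / (e^{β lₙ / r} - 1)`, the thermal (KMS) value of
`∑ₙ aₙ^{(β)} lₙ²/r²`. -/
noncomputable def kmsG (c r : ℝ) (β : ℝ) : ℝ :=
  ∑' n : ℕ, (((n : ℝ) + 1) ^ 2 * lfun c n / (2 * π ^ 2 * r ^ 4)) *
    (1 / (Real.exp (β * lfun c n / r) - 1))


noncomputable def kterm (c r β : ℝ) (n : ℕ) : ℝ :=
  (((n : ℝ) + 1) ^ 2 * lfun c n / (2 * π ^ 2 * r ^ 4)) *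
    (1 / (Real.exp (β * lfun c n / r) - 1))

lemma lfun_pos {c : ℝ} (hc : -1 < c) (n : ℕ) : 0 < lfun c n := by
  apply Real.sqrt_pos.2
  have : (0:ℝ) ≤ (n:ℝ) := Nat.cast_nonneg n
  nlinarith

lemma lfun_ge {c : ℝ} (hc : -1 < c) (n : ℕ) :
    Real.sqrt (min 1 (1 + c)) * ((n : ℝ) + 1) ≤ lfun c n := by
  have hn : (0:ℝ) ≤ (n:ℝ) := Nat.cast_nonneg n
  have hmin : (0:ℝ) < min 1 (1 + c) := lt_min one_pos (by linarith)
  have h1 : Real.sqrt (min 1 (1 + c)) * ((n:ℝ)+1) =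
      Real.sqrt (min 1 (1 + c) * ((n:ℝ)+1)^2) := by
    rw [Real.sqrt_mul hmin.le, Real.sqrt_sq (by linarith)]
  rw [h1, lfun]
  apply Real.sqrt_le_sqrt
  rcases le_total c 0 with h | h
  · have h2 : min 1 (1+c) ≤ 1 + c := min_le_right _ _
    have h4 : c * ((n:ℝ)^2 + 2*n) ≤ 0 :=
      mul_nonpos_of_nonpos_of_nonneg h (by nlinarith)
    have h5 : min 1 (1+c) * ((n:ℝ)+1)^2 ≤ (1+c) * ((n:ℝ)+1)^2 :=
      mul_le_mul_of_nonneg_right h2 (by positivity)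
    nlinarith
  · have h2 : min 1 (1+c) ≤ 1 := min_le_left _ _
    nlinarith

lemma lfun_le (c : ℝ) (n : ℕ) :
    lfun c n ≤ Real.sqrt (1 + max c 0) * ((n : ℝ) + 1) := by
  have hn : (0:ℝ) ≤ (n:ℝ) := Nat.cast_nonneg n
  have hmax : (0:ℝ) ≤ 1 + max c 0 := by
    have := le_max_right c 0; linarith
  have h1 : Real.sqrt (1 + max c 0) * ((n:ℝ)+1) =
      Real.sqrt ((1 + max c 0) * ((n:ℝ)+1)^2) := by
    rw [Real.sqrt_mul hmax, Real.sqrt_sq (by linarith)]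
  rw [h1, lfun]
  apply Real.sqrt_le_sqrt
  have h2 : c ≤ max c 0 := le_max_left _ _
  have h3 : 0 ≤ max c 0 := le_max_right _ _
  have h4 : max c 0 ≤ max c 0 * ((n:ℝ)+1)^2 := le_mul_of_one_le_right h3 (by nlinarith)
  nlinarith

lemma summable_cube_geom {x : ℝ} (hx0 : 0 ≤ x) (hx : x < 1) :
    Summable (fun n : ℕ => ((n : ℝ) + 1) ^ 3 * x ^ (n + 1)) := by
  have h : Summable (fun n : ℕ => (n : ℝ) ^ 3 * x ^ n) :=
    summable_pow_mul_geometric_of_norm_lt_one 3 (by rwa [Real.norm_eq_abs, abs_of_nonneg hx0])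
  have h2 := (summable_nat_add_iff (f := fun n : ℕ => (n : ℝ) ^ 3 * x ^ n) 1).2 h
  refine h2.congr fun n => ?_
  push_cast
  ring

lemma exp_denom_pos {c r β : ℝ} (hc : -1 < c) (hr : 0 < r) (hβ : 0 < β) (n : ℕ) :
    0 < Real.exp (β * lfun c n / r) - 1 := by
  have h : (0:ℝ) < β * lfun c n / r := by
    have := lfun_pos hc n; positivity
  have := Real.exp_lt_exp.2 h
  simp only [Real.exp_zero] at this
  linarith

lemma kterm_pos {c r β : ℝ} (hc : -1 < c) (hr : 0 < r) (hβ : 0 < β) (n : ℕ) :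
    0 < kterm c r β n := by
  have h1 := exp_denom_pos hc hr hβ n
  have h2 := lfun_pos hc n
  have hπ := Real.pi_pos
  unfold kterm
  positivity

lemma kterm_le_majorant {c r β : ℝ} (hc : -1 < c) (hr : 0 < r) (hβ : 0 < β) (n : ℕ) :
    kterm c r β n ≤
      (Real.sqrt (1 + max c 0) / (2 * π ^ 2 * r ^ 4) *
          (1 / (1 - Real.exp (-(β * Real.sqrt (min 1 (1 + c)) / r))))) *
        (((n : ℝ) + 1) ^ 3 * Real.exp (-(β * Real.sqrt (min 1 (1 + c)) / r)) ^ (n + 1)) := by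
  have hπ := Real.pi_pos
  set m := Real.sqrt (min 1 (1 + c)) with hm_def
  set M := Real.sqrt (1 + max c 0) with hM_def
  have hm : 0 < m := Real.sqrt_pos.2 (lt_min one_pos (by linarith))
  have hM : 0 < M := Real.sqrt_pos.2 (by have := le_max_right c 0; linarith)
  have hL := lfun_pos hc n
  have hn1 : (1:ℝ) ≤ (n:ℝ) + 1 := by have : (0:ℝ) ≤ (n:ℝ) := Nat.cast_nonneg n; linarith
  set y := β * lfun c n / r with hy_def
  set x := Real.exp (-(β * m / r)) with hx_def
  have hx0 : 0 < x := Real.exp_pos _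
  have hx1 : x < 1 := by
    rw [hx_def, Real.exp_lt_one_iff]
    have : 0 < β * m / r := by positivity
    linarith
  have hy_ge : β * m / r * ((n:ℝ) + 1) ≤ y := by
    rw [hy_def]
    have h1 := lfun_ge hc n
    have h2 : β / r * (m * ((n:ℝ)+1)) ≤ β / r * lfun c n :=
      mul_le_mul_of_nonneg_left h1 (by positivity)
    calc β * m / r * ((n:ℝ)+1) = β / r * (m * ((n:ℝ)+1)) := by ring
    _ ≤ β / r * lfun c n := h2
    _ = β * lfun c n / r := by ring
  have hy1 : β * m / r ≤ y := le_trans (le_mul_of_one_le_right (by positivity) hn1) hy_ge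
  have hexp_negy : Real.exp (-y) ≤ x ^ (n + 1) := by
    have : Real.exp (-(β * m / r) * ((n:ℝ)+1)) = x ^ (n+1) := by
      rw [hx_def, ← Real.exp_nat_mul]
      congr 1
      push_cast
      ring
    rw [← this]
    apply Real.exp_le_exp.2
    nlinarith
  have hdenom : Real.exp y * (1 - x) ≤ Real.exp y - 1 := by
    have h1 : Real.exp y * Real.exp (-y) = 1 := by
      rw [← Real.exp_add]; simp
    have h2 : Real.exp (-y) ≤ x := by
      apply Real.exp_le_exp.2; linarith
    nlinarith [Real.exp_pos y]
  have hdpos : 0 < Real.exp y - 1 := exp_denom_pos hc hr hβ n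
  have hfrac : 1 / (Real.exp y - 1) ≤ Real.exp (-y) * (1 / (1 - x)) := by
    have hprod : 0 < Real.exp y * (1 - x) := by
      have := Real.exp_pos y; nlinarith
    have h1 : 1 / (Real.exp y - 1) ≤ 1 / (Real.exp y * (1 - x)) :=
      one_div_le_one_div_of_le hprod hdenom
    have h2 : 1 / (Real.exp y * (1 - x)) = Real.exp (-y) * (1 / (1 - x)) := by
      rw [Real.exp_neg]
      field_simp
    rw [← h2]; exact h1
  have hA : ((n:ℝ)+1)^2 * lfun c n / (2 * π ^ 2 * r ^ 4) ≤
      M * ((n:ℝ)+1)^3 / (2 * π ^ 2 * r ^ 4) := by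
    apply div_le_div_of_nonneg_right ?_ (by positivity) |>.trans_eq rfl
    · have h1 := lfun_le c n
      calc ((n:ℝ)+1)^2 * lfun c n ≤ ((n:ℝ)+1)^2 * (M * ((n:ℝ)+1)) :=
            mul_le_mul_of_nonneg_left h1 (by positivity)
      _ = M * ((n:ℝ)+1)^3 := by ring
  calc kterm c r β n = (((n:ℝ)+1)^2 * lfun c n / (2 * π ^ 2 * r ^ 4)) * (1 / (Real.exp y - 1)) := rfl
  _ ≤ (M * ((n:ℝ)+1)^3 / (2 * π ^ 2 * r ^ 4)) * (Real.exp (-y) * (1 / (1 - x))) := by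
      apply mul_le_mul hA hfrac (by positivity) (by positivity)
  _ ≤ (M * ((n:ℝ)+1)^3 / (2 * π ^ 2 * r ^ 4)) * (x ^ (n+1) * (1 / (1 - x))) := by
      apply mul_le_mul_of_nonneg_left ?_ (by positivity)
      apply mul_le_mul_of_nonneg_right hexp_negy
      have : 0 < 1 - x := by linarith
      positivity
  _ = (M / (2 * π ^ 2 * r ^ 4) * (1 / (1 - x))) * (((n:ℝ)+1)^3 * x ^ (n+1)) := by ring

lemma summable_kterm {c r : ℝ} (hc : -1 < c) (hr : 0 < r) {β : ℝ} (hβ : 0 < β) :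
    Summable (kterm c r β) := by
  have hm : 0 < Real.sqrt (min 1 (1 + c)) := Real.sqrt_pos.2 (lt_min one_pos (by linarith))
  set x := Real.exp (-(β * Real.sqrt (min 1 (1 + c)) / r)) with hx_def
  have hx0 : 0 < x := Real.exp_pos _
  have hx1 : x < 1 := by
    rw [hx_def, Real.exp_lt_one_iff]
    have : 0 < β * Real.sqrt (min 1 (1 + c)) / r := by positivity
    linarith
  have hmaj : Summable (fun n : ℕ =>
      (Real.sqrt (1 + max c 0) / (2 * π ^ 2 * r ^ 4) * (1 / (1 - x))) *
        (((n : ℝ) + 1) ^ 3 * x ^ (n + 1))) :=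
    (summable_cube_geom hx0.le hx1).mul_left _
  exact hmaj.of_nonneg_of_le (fun n => (kterm_pos hc hr hβ n).le)
    (fun n => kterm_le_majorant hc hr hβ n)

lemma kterm_le_kterm {c r : ℝ} (hc : -1 < c) (hr : 0 < r) {β₁ β₂ : ℝ} (h1 : 0 < β₁)
    (h12 : β₁ ≤ β₂) (n : ℕ) : kterm c r β₂ n ≤ kterm c r β₁ n := by
  have hL := lfun_pos hc n
  have hπ := Real.pi_pos
  unfold kterm
  apply mul_le_mul_of_nonneg_left ?_ (by positivity)
  apply one_div_le_one_div_of_le (exp_denom_pos hc hr h1 n)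
  have : β₁ * lfun c n / r ≤ β₂ * lfun c n / r := by
    apply div_le_div_of_nonneg_right ?_ hr.le
    exact mul_le_mul_of_nonneg_right h12 hL.le
  linarith [Real.exp_le_exp.2 this]

lemma kterm_lt_kterm {c r : ℝ} (hc : -1 < c) (hr : 0 < r) {β₁ β₂ : ℝ} (h1 : 0 < β₁)
    (h12 : β₁ < β₂) (n : ℕ) : kterm c r β₂ n < kterm c r β₁ n := by
  have hL := lfun_pos hc n
  have hπ := Real.pi_pos
  unfold kterm
  apply mul_lt_mul_of_pos_left ?_ (by positivity)
  apply one_div_lt_one_div_of_lt (exp_denom_pos hc hr h1 n)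
  have : β₁ * lfun c n / r < β₂ * lfun c n / r := by
    apply div_lt_div_of_pos_right ?_ hr
    exact mul_lt_mul_of_pos_right h12 hL
  linarith [Real.exp_lt_exp.2 this]

lemma kterm_le_decay {c r : ℝ} (hc : -1 < c) (hr : 0 < r) {β : ℝ} (hβ : 1 ≤ β) (n : ℕ) :
    kterm c r β n ≤ Real.exp (-((β - 1) * lfun c 0 / r)) * kterm c r 1 n := by
  have hL := lfun_pos hc n
  have hL0 := lfun_pos hc 0
  have hπ := Real.pi_pos
  have hL0n : lfun c 0 ≤ lfun c n := by
    apply Real.sqrt_le_sqrt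
    have : (0:ℝ) ≤ (n:ℝ) := Nat.cast_nonneg n
    push_cast
    nlinarith
  have hkey : Real.exp ((β - 1) * lfun c 0 / r) * (Real.exp (1 * lfun c n / r) - 1) ≤
      Real.exp (β * lfun c n / r) - 1 := by
    have h1 : Real.exp ((β - 1) * lfun c 0 / r) ≤ Real.exp ((β - 1) * lfun c n / r) := by
      apply Real.exp_le_exp.2
      apply div_le_div_of_nonneg_right ?_ hr.le
      exact mul_le_mul_of_nonneg_left hL0n (by linarith)
    have h2 : Real.exp ((β - 1) * lfun c n / r) * (Real.exp (1 * lfun c n / r) - 1) =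
        Real.exp (β * lfun c n / r) - Real.exp ((β - 1) * lfun c n / r) := by
      rw [mul_sub, ← Real.exp_add, mul_one]
      ring_nf
    have hx : 0 ≤ (β - 1) * lfun c n / r :=
      div_nonneg (mul_nonneg (by linarith) hL.le) hr.le
    have h3 : (1:ℝ) ≤ Real.exp ((β - 1) * lfun c n / r) := by
      linarith [Real.add_one_le_exp ((β - 1) * lfun c n / r)]
    have h4 : 0 < Real.exp (1 * lfun c n / r) - 1 := exp_denom_pos hc hr one_pos n
    nlinarith
  have hd1 : 0 < Real.exp (1 * lfun c n / r) - 1 := exp_denom_pos hc hr one_pos n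
  have hdβ : 0 < Real.exp (β * lfun c n / r) - 1 := exp_denom_pos hc hr (by linarith) n
  have hfrac : 1 / (Real.exp (β * lfun c n / r) - 1) ≤
      Real.exp (-((β - 1) * lfun c 0 / r)) * (1 / (Real.exp (1 * lfun c n / r) - 1)) := by
    have hprod : 0 < Real.exp ((β - 1) * lfun c 0 / r) * (Real.exp (1 * lfun c n / r) - 1) := by
      have := Real.exp_pos ((β - 1) * lfun c 0 / r); positivity
    have h1 := one_div_le_one_div_of_le hprod hkey
    have h2 : 1 / (Real.exp ((β - 1) * lfun c 0 / r) * (Real.exp (1 * lfun c n / r) - 1)) =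
        Real.exp (-((β - 1) * lfun c 0 / r)) * (1 / (Real.exp (1 * lfun c n / r) - 1)) := by
      rw [Real.exp_neg]
      field_simp
    rw [← h2]; exact h1
  calc kterm c r β n = (((n:ℝ)+1)^2 * lfun c n / (2 * π ^ 2 * r ^ 4)) *
        (1 / (Real.exp (β * lfun c n / r) - 1)) := rfl
  _ ≤ (((n:ℝ)+1)^2 * lfun c n / (2 * π ^ 2 * r ^ 4)) *
        (Real.exp (-((β - 1) * lfun c 0 / r)) * (1 / (Real.exp (1 * lfun c n / r) - 1))) :=
      mul_le_mul_of_nonneg_left hfrac (by positivity)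
  _ = Real.exp (-((β - 1) * lfun c 0 / r)) * kterm c r 1 n := by
      unfold kterm; ring

lemma kmsG_eq (c r β : ℝ) : kmsG c r β = ∑' n : ℕ, kterm c r β n := rfl

lemma continuousOn_kmsG_Ioi {c r : ℝ} (hc : -1 < c) (hr : 0 < r) {b : ℝ} (hb : 0 < b) :
    ContinuousOn (kmsG c r) (Set.Ioi b) := by
  have h : ContinuousOn (fun β => ∑' n : ℕ, kterm c r β n) (Set.Ioi b) := by
    apply continuousOn_tsum (u := kterm c r b) ?_ (summable_kterm hc hr hb)
    · intro n β hβ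
      rw [Real.norm_eq_abs, abs_of_pos (kterm_pos hc hr (hb.trans hβ) n)]
      exact kterm_le_kterm hc hr hb (le_of_lt hβ) n
    · intro n
      unfold kterm
      apply ContinuousOn.mul continuousOn_const
      apply ContinuousOn.div continuousOn_const
      · exact (Continuous.sub ((Real.continuous_exp).comp (by continuity)) continuous_const).continuousOn
      · intro β hβ
        exact ne_of_gt (exp_denom_pos hc hr (hb.trans hβ) n)
  exact h

/-- For `c > -1` and `r > 0`, the KMS series `G(β)` converges for every `β > 0`, defines a
continuous, strictly decreasing function on `(0, ∞)` with `G(β) → ∞` as `β → 0⁺` and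
`G(β) → 0` as `β → ∞`; consequently for each `Y₂ > 0` there is a unique `β > 0` with
`G(β) = Y₂`. -/
theorem kmsG_properties (c r : ℝ) (hc : -1 < c) (hr : 0 < r) :
    (∀ β : ℝ, 0 < β → Summable fun n : ℕ =>
      (((n : ℝ) + 1) ^ 2 * lfun c n / (2 * π ^ 2 * r ^ 4)) *
        (1 / (Real.exp (β * lfun c n / r) - 1))) ∧
    ContinuousOn (kmsG c r) (Set.Ioi 0) ∧
    StrictAntiOn (kmsG c r) (Set.Ioi 0) ∧
    Tendsto (kmsG c r) (nhdsWithin 0 (Set.Ioi 0)) atTop ∧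
    Tendsto (kmsG c r) atTop (nhds 0) ∧
    (∀ Y₂ : ℝ, 0 < Y₂ → ∃! β : ℝ, 0 < β ∧ kmsG c r β = Y₂) := by
  have hsum : ∀ β : ℝ, 0 < β → Summable (kterm c r β) := fun β hβ => summable_kterm hc hr hβ
  -- Continuity
  have hcont : ContinuousOn (kmsG c r) (Set.Ioi 0) := by
    intro β hβ
    have hβ0 : (0:ℝ) < β := hβ
    have h1 : ContinuousOn (kmsG c r) (Set.Ioi (β / 2)) :=
      continuousOn_kmsG_Ioi hc hr (by linarith)
    exact (h1.continuousAt (Ioi_mem_nhds (by linarith))).continuousWithinAt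
  -- Strict antitonicity
  have hanti : StrictAntiOn (kmsG c r) (Set.Ioi 0) := by
    intro β₁ h₁ β₂ h₂ h12
    rw [kmsG_eq, kmsG_eq]
    exact Summable.tsum_lt_tsum (fun n => kterm_le_kterm hc hr h₁ h12.le n)
      (kterm_lt_kterm hc hr h₁ h12 0) (hsum β₂ ((h₁ : (0:ℝ) < β₁).trans h12)) (hsum β₁ h₁)
  -- Tendsto atTop as β → 0⁺
  have hzero : Tendsto (kmsG c r) (nhdsWithin 0 (Set.Ioi 0)) atTop := by
    have hL0 := lfun_pos hc 0
    have hπ := Real.pi_pos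
    have hd : Tendsto (fun β => Real.exp (β * lfun c 0 / r) - 1)
        (nhdsWithin 0 (Set.Ioi 0)) (nhdsWithin 0 (Set.Ioi 0)) := by
      rw [tendsto_nhdsWithin_iff]
      constructor
      · have hcontd : Continuous fun β => Real.exp (β * lfun c 0 / r) - 1 := by
          continuity
        have := hcontd.tendsto 0
        simp only [zero_mul, zero_div, Real.exp_zero, sub_self] at this
        exact this.mono_left nhdsWithin_le_nhds
      · filter_upwards [self_mem_nhdsWithin] with β hβ
        exact exp_denom_pos hc hr hβ 0
    have hinv : Tendsto (fun β => (Real.exp (β * lfun c 0 / r) - 1)⁻¹)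
        (nhdsWithin 0 (Set.Ioi 0)) atTop := tendsto_inv_nhdsGT_zero.comp hd
    have hterm0 : Tendsto (fun β => kterm c r β 0) (nhdsWithin 0 (Set.Ioi 0)) atTop := by
      have h := Tendsto.const_mul_atTop
        (r := (((0:ℕ):ℝ) + 1) ^ 2 * lfun c 0 / (2 * π ^ 2 * r ^ 4)) (by positivity) hinv
      refine h.congr fun β => ?_
      unfold kterm
      rw [one_div]
    apply tendsto_atTop_mono' _ ?_ hterm0
    filter_upwards [self_mem_nhdsWithin] with β hβ
    rw [kmsG_eq]
    exact Summable.le_tsum (hsum β hβ) 0 (fun j _ => (kterm_pos hc hr hβ j).le)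
  -- Tendsto 0 as β → ∞
  have hinfty : Tendsto (kmsG c r) atTop (nhds 0) := by
    have hL0 := lfun_pos hc 0
    have hub : ∀ β : ℝ, 1 ≤ β →
        kmsG c r β ≤ Real.exp (-((β - 1) * lfun c 0 / r)) * kmsG c r 1 := by
      intro β hβ
      rw [kmsG_eq, kmsG_eq, ← tsum_mul_left]
      exact Summable.tsum_le_tsum (fun n => kterm_le_decay hc hr hβ n)
        (hsum β (by linarith)) ((hsum 1 one_pos).mul_left _)
    have hrhs : Tendsto (fun β => Real.exp (-((β - 1) * lfun c 0 / r)) * kmsG c r 1)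
        atTop (nhds 0) := by
      have h1 : Tendsto (fun β : ℝ => β - 1) atTop atTop :=
        tendsto_atTop_add_const_right atTop (-1) tendsto_id |>.congr
          (fun x => (sub_eq_add_neg x 1).symm)
      have h2 : Tendsto (fun β : ℝ => (β - 1) * (lfun c 0 / r)) atTop atTop :=
        h1.atTop_mul_const (by positivity)
      have h3 : Tendsto (fun β : ℝ => -((β - 1) * lfun c 0 / r)) atTop atBot := by
        refine (tendsto_neg_atTop_atBot.comp h2).congr fun β => ?_
        simp only [Function.comp_apply]
        ring
      have h4 : Tendsto (fun β : ℝ => Real.exp (-((β - 1) * lfun c 0 / r))) atTop (nhds 0) :=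
        Real.tendsto_exp_atBot.comp h3
      have := h4.mul_const (kmsG c r 1)
      rwa [zero_mul] at this
    apply squeeze_zero' ?_ ?_ hrhs
    · filter_upwards [eventually_gt_atTop 0] with β hβ
      rw [kmsG_eq]
      exact tsum_nonneg fun n => (kterm_pos hc hr hβ n).le
    · filter_upwards [eventually_ge_atTop 1] with β hβ
      exact hub β hβ
  refine ⟨hsum, hcont, hanti, hzero, hinfty, ?_⟩
  -- Existence and uniqueness
  intro Y₂ hY₂
  obtain ⟨β₁, hβ₁Y, hβ₁⟩ : ∃ β₁, Y₂ ≤ kmsG c r β₁ ∧ β₁ ∈ Set.Ioi (0:ℝ) :=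
    ((hzero.eventually_ge_atTop Y₂).and self_mem_nhdsWithin).exists
  obtain ⟨β₂, hβ₂gt, hβ₂Y⟩ : ∃ β₂, β₁ < β₂ ∧ kmsG c r β₂ < Y₂ := by
    have h1 : ∀ᶠ β in atTop, kmsG c r β < Y₂ := hinfty.eventually_lt_const hY₂
    exact ((eventually_gt_atTop β₁).and h1).exists
  have hβ₂mem : β₂ ∈ Set.Ioi (0:ℝ) := lt_trans hβ₁ hβ₂gt
  have hsub : Set.Icc β₁ β₂ ⊆ Set.Ioi (0:ℝ) := fun x hx => lt_of_lt_of_le hβ₁ hx.1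
  have hivt := intermediate_value_Icc' hβ₂gt.le (hcont.mono hsub)
  obtain ⟨β, hβmem, hβeq⟩ := hivt ⟨hβ₂Y.le, hβ₁Y⟩
  refine ⟨β, ⟨lt_of_lt_of_le hβ₁ hβmem.1, hβeq⟩, ?_⟩
  intro β' ⟨hβ'pos, hβ'eq⟩
  exact hanti.injOn hβ'pos (hsub hβmem) (by rw [hβ'eq, hβeq])
end
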